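/- Fix n ≥ 2 and β ∈ (0,1). Set τ = 0, a = β, b = 1. Then the ellipsoid E = {(y_1, ȳ) ∈ ℝ × ℝ^{n−1} : y_1²/β² + ‖ȳ‖² ≤ 1} is contained in the slab B_{−β,β} = {x ∈ ℝ^n : ‖x‖ ≤ 1, −β ≤ x_1 ≤ β}, and E is the maximum volume ellipsoid inscribed in B_{−β,β}. -/

import Mathlib

/-!
If `c + A(B_n)` lies in the slab, then so does `c - A(B_n)`, and `2Au = (c + Au) - (c - Au)`
puts `A(B_n)` in the unit ball, so every eigenvalue of `A` is at most `1`. The first coordinates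
of `c ± Ae₁` give `A₁₁ ≤ β`, and `A₁₁ = ⟪e₁, Ae₁⟫` is a convex combination of the eigenvalues,
so some eigenvalue is at most `β`. Hence `det A`, the product of the eigenvalues, is at most `β`.
-/

open Finset
open scoped RealInnerProductSpace

def slab {ι : Type*} [Fintype ι] (i : ι) (β : ℝ) : Set (EuclideanSpace ℝ ι) :=
  {x | ‖x‖ ≤ 1 ∧ -β ≤ x i ∧ x i ≤ β}

lemma ellipsoid_subset_slab {ι : Type*} [Fintype ι] (i : ι) {β : ℝ} (hβ₀ : 0 < β)
    (hβ₁ : β ≤ 1) :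
    {y : EuclideanSpace ℝ ι | y i ^ 2 / β ^ 2 + (‖y‖ ^ 2 - y i ^ 2) ≤ 1} ⊆ slab i β := by
  intro y hy
  have hβ2 : 0 < β ^ 2 := by positivity
  have hyi : y i ^ 2 ≤ ‖y‖ ^ 2 := by
    simpa using pow_le_pow_left₀ (norm_nonneg _) (PiLp.norm_apply_le y i) 2
  have hdiv : y i ^ 2 ≤ y i ^ 2 / β ^ 2 := le_div_self (sq_nonneg _) hβ2 (by nlinarith)
  have hcoord : y i ^ 2 / β ^ 2 ≤ 1 := by linarith [hy.out]
  rw [div_le_one hβ2] at hcoord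
  exact ⟨by nlinarith [norm_nonneg y, hy.out], abs_le_of_sq_le_sq' hcoord hβ₀.le⟩

lemma Finset.exists_le_sum_mul_of_sum_eq_one {ι : Type*} [Fintype ι] {w : ι → ℝ}
    (f : ι → ℝ) (hw₀ : ∀ i, 0 ≤ w i) (hw₁ : ∑ i, w i = 1) : ∃ j, f j ≤ ∑ i, w i * f i := by
  have : Nonempty ι := by
    by_contra h
    simp [not_nonempty_iff.1 h] at hw₁
  obtain ⟨j, -, hj⟩ := exists_min_image univ f univ_nonempty
  refine ⟨j, ?_⟩
  calc f j = ∑ i, w i * f j := by rw [← sum_mul, hw₁, one_mul]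
    _ ≤ ∑ i, w i * f i := sum_le_sum fun i hi => mul_le_mul_of_nonneg_left (hj i hi) (hw₀ i)

lemma norm_le_of_norm_add_le_of_norm_sub_le {E : Type*} [SeminormedAddCommGroup E]
    [NormedSpace ℝ E] {c x : E} {r : ℝ} (h₁ : ‖c + x‖ ≤ r) (h₂ : ‖c - x‖ ≤ r) : ‖x‖ ≤ r := by
  have h : ‖(2 : ℝ) • x‖ ≤ 2 * r := by
    calc ‖(2 : ℝ) • x‖ = ‖(c + x) - (c - x)‖ := by congr 1; module
      _ ≤ ‖c + x‖ + ‖c - x‖ := norm_sub_le _ _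
      _ ≤ 2 * r := by linarith
  rw [norm_smul, Real.norm_two] at h
  linarith

namespace Matrix

variable {ι : Type*} [Fintype ι] [DecidableEq ι] {A : Matrix ι ι ℝ}

namespace IsHermitian

lemma toEuclideanLin_eigenvectorBasis (hA : A.IsHermitian) (i : ι) :
    toEuclideanLin A (hA.eigenvectorBasis i) = hA.eigenvalues i • hA.eigenvectorBasis i := by
  ext j
  simpa [toLpLin_apply] using congrFun (hA.mulVec_eigenvectorBasis i) j

lemma inner_toEuclideanLin_self (hA : A.IsHermitian) (v : EuclideanSpace ℝ ι) :
    ⟪v, toEuclideanLin A v⟫ = ∑ i, ⟪v, hA.eigenvectorBasis i⟫ ^ 2 * hA.eigenvalues i := by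
  rw [← hA.eigenvectorBasis.sum_inner_mul_inner]
  refine sum_congr rfl fun i _ => ?_
  rw [← isSymmetric_toEuclideanLin_iff.mpr hA, toEuclideanLin_eigenvectorBasis,
    real_inner_smul_left, real_inner_comm v]
  ring

lemma exists_eigenvalues_le_inner (hA : A.IsHermitian) {v : EuclideanSpace ℝ ι}
    (hv : ‖v‖ = 1) :
    ∃ i, hA.eigenvalues i ≤ ⟪v, toEuclideanLin A v⟫ := by
  rw [hA.inner_toEuclideanLin_self]
  exact exists_le_sum_mul_of_sum_eq_one _ (fun i => sq_nonneg _)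
    (by rw [hA.eigenvectorBasis.sum_sq_inner_left, hv, one_pow])

lemma eigenvalues_le_one (hA : A.IsHermitian) (h : ∀ u, ‖u‖ ≤ 1 → ‖toEuclideanLin A u‖ ≤ 1)
    (i : ι) :
    hA.eigenvalues i ≤ 1 := by
  have hb : ‖hA.eigenvectorBasis i‖ = 1 := hA.eigenvectorBasis.orthonormal.1 i
  have := h _ hb.le
  rw [hA.toEuclideanLin_eigenvectorBasis, norm_smul, hb, mul_one, Real.norm_eq_abs] at this
  exact (le_abs_self _).trans this

end IsHermitian

namespace PosDef

lemma det_le_eigenvalues (hA : A.PosDef) (h : ∀ i, hA.1.eigenvalues i ≤ 1) (j : ι) :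
    A.det ≤ hA.1.eigenvalues j := by
  rw [hA.1.det_eq_prod_eigenvalues, ← prod_singleton hA.1.eigenvalues j]
  exact prod_le_prod_of_subset_of_le_one (subset_univ _) (fun i _ => (hA.eigenvalues_pos i).le)
    fun i _ _ => h i

lemma det_le_inner_toEuclideanLin_self (hA : A.PosDef)
    (h : ∀ u, ‖u‖ ≤ 1 → ‖toEuclideanLin A u‖ ≤ 1) {v : EuclideanSpace ℝ ι} (hv : ‖v‖ = 1) :
    A.det ≤ ⟪v, toEuclideanLin A v⟫ := by
  obtain ⟨j, hj⟩ := hA.1.exists_eigenvalues_le_inner hv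
  exact (hA.det_le_eigenvalues (hA.1.eigenvalues_le_one h) j).trans hj

lemma det_le_of_image_closedBall_subset_slab (hA : A.PosDef) (c : EuclideanSpace ℝ ι) (i : ι)
    {β : ℝ} (h : ∀ u, ‖u‖ ≤ 1 → c + toEuclideanLin A u ∈ slab i β) : A.det ≤ β := by
  have hneg : ∀ u, ‖u‖ ≤ 1 → c - toEuclideanLin A u ∈ slab i β := fun u hu => by
    simpa [sub_eq_add_neg] using h (-u) (by rwa [norm_neg])
  have hball : ∀ u, ‖u‖ ≤ 1 → ‖toEuclideanLin A u‖ ≤ 1 := fun u hu =>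
    norm_le_of_norm_add_le_of_norm_sub_le (h u hu).1 (hneg u hu).1
  set e := EuclideanSpace.single i (1 : ℝ)
  have he : ‖e‖ = 1 := by simp [e]
  have hAe : toEuclideanLin A e i = A i i := by simp [e, toLpLin_apply]
  have hAii : A i i ≤ β := by
    have h₁ := (h e he.le).2.2
    have h₂ := (hneg e he.le).2.1
    rw [PiLp.add_apply, hAe] at h₁
    rw [PiLp.sub_apply, hAe] at h₂
    linarith
  calc A.det ≤ ⟪e, toEuclideanLin A e⟫ := hA.det_le_inner_toEuclideanLin_self hball he
    _ = A i i := by simp [e, EuclideanSpace.inner_single_left, hAe]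
    _ ≤ β := hAii

end PosDef

end Matrix

/-- For `0 < β < 1`, the ellipsoid `E = {y : y₁²/β² + ‖ȳ‖² ≤ 1}` is contained in the
symmetric slab `B_{-β,β} = {x : ‖x‖ ≤ 1, -β ≤ x₁ ≤ β}`, and it is the maximum volume
inscribed ellipsoid: any ellipsoid `c + A(B_n)` (with `A` symmetric positive definite)
contained in the slab has `det A ≤ β` (the determinant of `diag(β,1,…,1)`). -/
theorem symmetric_slab_john_ellipsoid
    (n : ℕ) (hn : 2 ≤ n) (β : ℝ) (hβ0 : 0 < β) (hβ1 : β < 1) :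
    {y : EuclideanSpace ℝ (Fin n) |
        (y ⟨0, by omega⟩) ^ 2 / β ^ 2 + (‖y‖ ^ 2 - (y ⟨0, by omega⟩) ^ 2) ≤ 1}
      ⊆ {x : EuclideanSpace ℝ (Fin n) | ‖x‖ ≤ 1 ∧ -β ≤ x ⟨0, by omega⟩ ∧ x ⟨0, by omega⟩ ≤ β}
    ∧
    ∀ (A : Matrix (Fin n) (Fin n) ℝ) (c : EuclideanSpace ℝ (Fin n)),
      A.IsSymm → A.PosDef →
      {x : EuclideanSpace ℝ (Fin n) |
          ∃ u : EuclideanSpace ℝ (Fin n), ‖u‖ ≤ 1 ∧ x = c + Matrix.toEuclideanLin A u}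
        ⊆ {x : EuclideanSpace ℝ (Fin n) | ‖x‖ ≤ 1 ∧ -β ≤ x ⟨0, by omega⟩ ∧ x ⟨0, by omega⟩ ≤ β} →
      A.det ≤ β :=
  ⟨ellipsoid_subset_slab _ hβ0 hβ1.le, fun _ c _ hA hsub =>
    hA.det_le_of_image_closedBall_subset_slab c _ fun u hu => hsub ⟨u, hu, rfl⟩⟩
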